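/- Let G be a group with finite generating set Σ such that the outer automorphism group Out(G) = Aut(G)/Inn(G) is finite, of cardinality d. Then for every n ∈ ℕ, α_{G,Σ}(n) ≤ γ_{G,Σ}(n) ≤ d · α_{G,Σ}(n), where γ_{G,Σ}(n) is the number of conjugacy classes of G containing an element of word length at most n and α_{G,Σ}(n) is the number of Aut(G)-orbits of G containing an element of word length at most n. In particular the automorphic growth function of G is equivalent (∼) to its conjugacy growth function. -/

import Mathlib

/-!
Conjugacy classes are the orbits of the inner automorphism group `Inn G`, a subgroup of index
`d` in `Aut G`. For any subgroup `N` of finite index in a group `A` acting on `X`, the `N`-orbits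
refine the `A`-orbits, and the `N`-orbits inside the `A`-orbit of `x` are the images of
`aN ↦ N • a⁻¹ • x`, so there are at most `[A : N]` of them. On the finite word balls this gives
`α ≤ γ ≤ d α`, and since both functions are monotone these bounds give `α ∼ γ`.
-/

/-- The ball of radius `n` in a group with respect to a generating set `S`:
elements expressible as a product of at most `n` elements of `S ∪ S⁻¹`. -/
def wordBall {G : Type*} [Group G] (S : Set G) (n : ℕ) : Set G :=
  {g | ∃ l : List G, (∀ x ∈ l, x ∈ S ∨ x⁻¹ ∈ S) ∧ l.length ≤ n ∧ l.prod = g}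

/-- The automorphic growth function: the number of `Aut G`-orbits of `G`
containing an element of word length at most `n` with respect to `S`. -/
noncomputable def autGrowth {G : Type*} [Group G] (S : Set G) (n : ℕ) : ℕ :=
  Set.ncard (Quotient.mk (MulAction.orbitRel (MulAut G) G) '' wordBall S n)

def GrowthLe (f g : ℕ → ℕ) : Prop :=
  ∃ lam : ℕ, 0 < lam ∧ ∀ n, f n ≤ lam * g (lam * n + lam) + lam

def GrowthEquiv (f g : ℕ → ℕ) : Prop := GrowthLe f g ∧ GrowthLe g f


/-- The conjugacy growth function: the number of conjugacy classes of `G`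
containing an element of word length at most `n` with respect to `S`. -/
noncomputable def conjGrowth {G : Type*} [Group G] (S : Set G) (n : ℕ) : ℕ :=
  Set.ncard ((ConjClasses.mk : G → ConjClasses G) '' wordBall S n)

namespace MulAction

variable {A X : Type*} [Group A] [MulAction A X] (N : Subgroup A)

def cosetToSubgroupOrbit (x : X) : A ⧸ N → orbitRel.Quotient N X :=
  Quotient.lift (fun a => ⟦a⁻¹ • x⟧) fun a b hab => by
    refine Quotient.sound ⟨⟨a⁻¹ * b, QuotientGroup.leftRel_apply.mp hab⟩, ?_⟩
    simp [smul_smul]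

@[simp]
lemma cosetToSubgroupOrbit_mk (x : X) (a : A) :
    cosetToSubgroupOrbit N x (a : A ⧸ N) = ⟦a⁻¹ • x⟧ := rfl

lemma mk_mem_range_cosetToSubgroupOrbit {x y : X} (hy : y ∈ orbit A x) :
    (⟦y⟧ : orbitRel.Quotient N X) ∈ Set.range (cosetToSubgroupOrbit N x) := by
  obtain ⟨a, rfl⟩ := hy
  exact ⟨(a⁻¹ : A), by simp⟩

lemma ncard_image_orbitRel_le_subgroup {s : Set X} (hs : s.Finite) :
    (Quotient.mk (orbitRel A X) '' s).ncard ≤ (Quotient.mk (orbitRel N X) '' s).ncard := by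
  have : Quotient.mk (orbitRel A X) '' s =
      Setoid.map_of_le (orbitRel_subgroup_le N) '' (Quotient.mk (orbitRel N X) '' s) := by
    rw [Set.image_image]; rfl
  rw [this]
  exact Set.ncard_image_le (hs.image _)

lemma ncard_image_orbitRel_subgroup_le_index_mul [Finite (A ⧸ N)] {s : Set X}
    (hs : s.Finite) :
    (Quotient.mk (orbitRel N X) '' s).ncard ≤
      N.index * (Quotient.mk (orbitRel A X) '' s).ncard := by
  have hsub : Quotient.mk (orbitRel N X) '' s ⊆
      (fun p => cosetToSubgroupOrbit N p.1.out p.2) ''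
        ((Quotient.mk (orbitRel A X) '' s) ×ˢ .univ) := by
    rintro _ ⟨y, hy, rfl⟩
    obtain ⟨q, hq⟩ := mk_mem_range_cosetToSubgroupOrbit N
      (orbitRel_apply.mp ((orbitRel A X).symm (Quotient.mk_out y)))
    exact ⟨(⟦y⟧, q), ⟨⟨y, hy, rfl⟩, trivial⟩, hq⟩
  calc (Quotient.mk (orbitRel N X) '' s).ncard
      ≤ ((Quotient.mk (orbitRel A X) '' s) ×ˢ (.univ : Set (A ⧸ N))).ncard :=
        (Set.ncard_le_ncard hsub ((hs.image _).prod Set.finite_univ |>.image _)).trans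
          (Set.ncard_image_le ((hs.image _).prod Set.finite_univ))
    _ = N.index * (Quotient.mk (orbitRel A X) '' s).ncard := by
        rw [Set.ncard_prod, Set.ncard_univ, mul_comm]; rfl

end MulAction

lemma MulAut.orbitRel_conj_range {G : Type*} [Group G] :
    MulAction.orbitRel (MulAut.conj : G →* MulAut G).range G = IsConj.setoid G := by
  ext a b
  change a ∈ MulAction.orbit _ b ↔ IsConj a b
  rw [isConj_comm, isConj_iff]
  constructor
  · rintro ⟨⟨_, c, rfl⟩, rfl⟩
    exact ⟨c, rfl⟩
  · rintro ⟨c, rfl⟩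
    exact ⟨⟨MulAut.conj c, c, rfl⟩, rfl⟩

section WordGrowth

variable {G : Type*} [Group G] {S : Set G}

lemma wordBall_mono : Monotone (wordBall S) := by
  rintro m n hmn _ ⟨l, hl, hlen, rfl⟩
  exact ⟨l, hl, hlen.trans hmn, rfl⟩

lemma wordBall_finite (hS : S.Finite) (n : ℕ) : (wordBall S n).Finite := by
  have : Finite ↥(S ∪ S⁻¹) := (hS.union hS.inv).to_subtype
  refine ((List.finite_length_le ↥(S ∪ S⁻¹) n).image
    fun l => (l.map Subtype.val).prod).subset ?_
  rintro _ ⟨l, hl, hlen, rfl⟩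
  lift l to List ↥(S ∪ S⁻¹) using hl
  exact ⟨l, by simpa using hlen, rfl⟩

lemma autGrowth_mono (hS : S.Finite) : Monotone (autGrowth S) := fun _ n h =>
  Set.ncard_le_ncard (Set.image_mono (wordBall_mono h)) ((wordBall_finite hS n).image _)

lemma conjGrowth_mono (hS : S.Finite) : Monotone (conjGrowth S) := fun _ n h =>
  Set.ncard_le_ncard (Set.image_mono (wordBall_mono h)) ((wordBall_finite hS n).image _)

lemma conjGrowth_eq_ncard_image_orbitRel_conj_range (S : Set G) (n : ℕ) :
    conjGrowth S n = (Quotient.mk (MulAction.orbitRel (MulAut.conj : G →* MulAut G).range G) ''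
      wordBall S n).ncard := by
  rw [conjGrowth, MulAut.orbitRel_conj_range]
  rfl

lemma autGrowth_le_conjGrowth (hS : S.Finite) (n : ℕ) : autGrowth S n ≤ conjGrowth S n := by
  rw [conjGrowth_eq_ncard_image_orbitRel_conj_range]
  exact MulAction.ncard_image_orbitRel_le_subgroup _ (wordBall_finite hS n)

lemma conjGrowth_le_card_mul_autGrowth
    [Finite (MulAut G ⧸ (MulAut.conj : G →* MulAut G).range)] (hS : S.Finite) (n : ℕ) :
    conjGrowth S n ≤
      Nat.card (MulAut G ⧸ (MulAut.conj : G →* MulAut G).range) * autGrowth S n := by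
  rw [conjGrowth_eq_ncard_image_orbitRel_conj_range]
  exact MulAction.ncard_image_orbitRel_subgroup_le_index_mul _ (wordBall_finite hS n)

end WordGrowth

lemma GrowthLe.of_le_mul {f g : ℕ → ℕ} {c : ℕ} (hc : 0 < c) (hg : Monotone g)
    (h : ∀ n, f n ≤ c * g n) : GrowthLe f g :=
  ⟨c, hc, fun n => (h n).trans <|
    (Nat.mul_le_mul_left c (hg (Nat.le_add_right_of_le (Nat.le_mul_of_pos_left n hc)))).trans
      (Nat.le_add_right _ _)⟩

theorem automorphic_growth_equiv_conjugacy_growth_of_finite_out_general {G : Type*} [Group G]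
    (S : Finset G)
    (d : ℕ)
    (hfin : Finite (MulAut G ⧸ (MulAut.conj : G →* MulAut G).range))
    (hd : Nat.card (MulAut G ⧸ (MulAut.conj : G →* MulAut G).range) = d) :
    (∀ n : ℕ,
      autGrowth (S : Set G) n ≤ conjGrowth (S : Set G) n ∧
      conjGrowth (S : Set G) n ≤ d * autGrowth (S : Set G) n) ∧
    GrowthEquiv (autGrowth (S : Set G)) (conjGrowth (S : Set G)) := by
  have hS := S.finite_toSet
  have bounds (n : ℕ) : autGrowth (S : Set G) n ≤ conjGrowth (S : Set G) n ∧
      conjGrowth (S : Set G) n ≤ d * autGrowth (S : Set G) n :=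
    ⟨autGrowth_le_conjGrowth hS n, hd ▸ conjGrowth_le_card_mul_autGrowth hS n⟩
  exact ⟨bounds,
    .of_le_mul one_pos (conjGrowth_mono hS) fun n => by simpa using (bounds n).1,
    .of_le_mul (hd ▸ Nat.card_pos) (autGrowth_mono hS) fun n => (bounds n).2⟩

/-- if `Out G = Aut G / Inn G` is finite of cardinality `d`, then for
all `n`, `α(n) ≤ γ(n) ≤ d · α(n)`, and hence the automorphic and conjugacy growth
functions are equivalent. -/
theorem automorphic_growth_equiv_conjugacy_growth_of_finite_out {G : Type*} [Group G]
    (S : Finset G) (hS : Subgroup.closure (S : Set G) = ⊤)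
    (d : ℕ)
    (hfin : Finite (MulAut G ⧸ (MulAut.conj : G →* MulAut G).range))
    (hd : Nat.card (MulAut G ⧸ (MulAut.conj : G →* MulAut G).range) = d) :
    (∀ n : ℕ,
      autGrowth (S : Set G) n ≤ conjGrowth (S : Set G) n ∧
      conjGrowth (S : Set G) n ≤ d * autGrowth (S : Set G) n) ∧
    GrowthEquiv (autGrowth (S : Set G)) (conjGrowth (S : Set G)) :=
  automorphic_growth_equiv_conjugacy_growth_of_finite_out_general S d hfin hd
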